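/- arXiv:2508.07609 — 5 statements merged into one kernel-verified Lean document; each statement's English description precedes it below -/
import Mathlib

section
/- If D : S → M is a Jordan (δ,f)-derivation on a 2-torsion-free bimodule M satisfying D(x∘y) = D(x)∘'y + f(x)∘'δ(y), then D(y)x + f(y)δ(x) = yD(x) + δ(y)f(x) for all x, y ∈ S. -/
/-!
Expanding `D((x + y)²)` by the Jordan identity gives a second formula for `D(xy + yx)`;
comparing it with the product rule, the terms `yD(x) + δ(y)f(x)` of the rule must match
`D(y)x + f(y)δ(x)`.
-/

open MulOpposite

theorem map_mul_add_mul_of_map_mul_self {S M : Type*} [Ring S] [AddCommGroup M]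
    [Module Sᵐᵒᵖ M] {δ : S → S} (hδadd : ∀ a b : S, δ (a + b) = δ a + δ b)
    {f : S → M} (hfadd : ∀ a b : S, f (a + b) = f a + f b)
    {D : S → M} (hDadd : ∀ a b : S, D (a + b) = D a + D b)
    (hJordan : ∀ x : S, D (x * x) = op x • D x + op (δ x) • f x) (x y : S) :
    D (x * y + y * x) = op y • D x + op x • D y + op (δ y) • f x + op (δ x) • f y := by
  have hsq := hJordan (x + y)
  rw [show (x + y) * (x + y) = x * x + (x * y + y * x) + y * y by noncomm_ring,
    hDadd, hDadd (x * x), hJordan, hJordan, hδadd, hfadd, hDadd x y] at hsq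
  simp only [op_add, add_smul, smul_add] at hsq
  linear_combination (norm := abel) hsq

theorem jordan_derivation_symmetry_general
    {S M : Type*} [Ring S]
    [AddCommGroup M] [Module S M] [Module Sᵐᵒᵖ M]
    (δ : S → S) (hδadd : ∀ a b : S, δ (a + b) = δ a + δ b)
    (f : S → M) (hfadd : ∀ a b : S, f (a + b) = f a + f b)
    (D : S → M) (hDadd : ∀ a b : S, D (a + b) = D a + D b)
    (hJordan : ∀ x : S, D (x * x) = op x • D x + op (δ x) • f x)
    (hrule : ∀ x y : S, D (x * y + y * x) =
      (op y • D x + y • D x) + (op (δ y) • f x + δ y • f x)) :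
    ∀ x y : S, op x • D y + op (δ x) • f y = y • D x + δ y • f x := by
  intro x y
  have h := map_mul_add_mul_of_map_mul_self hδadd hfadd hDadd hJordan x y
  rw [hrule] at h
  linear_combination (norm := abel) -h

/-- For a Jordan `(δ,f)`-derivation `D` on a `2`-torsion-free bimodule `M`
satisfying the Jordan product rule, `D(y)x + f(y)δ(x) = yD(x) + δ(y)f(x)`. -/
theorem jordan_derivation_symmetry
    {R S M : Type*} [CommRing R] [Ring S] [Algebra R S]
    [AddCommGroup M] [Module S M] [Module Sᵐᵒᵖ M] [SMulCommClass S Sᵐᵒᵖ M]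
    (htf : ∀ m : M, 2 • m = 0 → m = 0)
    (δ : S → S) (hδadd : ∀ a b : S, δ (a + b) = δ a + δ b)
    (hδmul : ∀ a b : S, δ (a * b) = δ a * b + a * δ b)
    (f : S → M) (hfadd : ∀ a b : S, f (a + b) = f a + f b)
    (hfleft : ∀ a x : S, f (a * x) = a • f x)
    (hfright : ∀ x a : S, f (x * a) = op a • f x)
    (D : S → M) (hDadd : ∀ a b : S, D (a + b) = D a + D b)
    (hJordan : ∀ x : S, D (x * x) = op x • D x + op (δ x) • f x)
    (hrule : ∀ x y : S, D (x * y + y * x) =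
      (op y • D x + y • D x) + (op (δ y) • f x + δ y • f x)) :
    ∀ x y : S, op x • D y + op (δ x) • f y = y • D x + δ y • f x :=
  jordan_derivation_symmetry_general δ hδadd f hfadd D hDadd hJordan hrule
end

section
/- If D : S → M is a Jordan (δ,f)-derivation on a 2-torsion-free bimodule M, then D(xyx) = D(x)yx + f(x)δ(y)x + f(x)yδ(x) for all x, y ∈ S. -/
/-!
Linearizing `D(x²) = D(x)x + f(x)δ(x)` gives `D(xy + yx) = D(x)y + f(x)δ(y) + D(y)x + f(y)δ(x)`.
Apply `D` to `x(xy + yx) + (xy + yx)x = x²y + yx² + 2xyx`, expand both sides with this rule, the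
Leibniz rule for `δ` and right linearity of `f`: everything cancels except
`2D(xyx) = 2(D(x)yx + f(x)δ(y)x + f(x)yδ(x))`, and `M` has no `2`-torsion.
-/

open MulOpposite

section JordanDerivation

variable {S M : Type*} [Semiring S] [AddCommGroup M] [Module Sᵐᵒᵖ M]

theorem LinearMap.map_mul_eq_op_smul (f : S →ₗ[Sᵐᵒᵖ] M) (x a : S) :
    f (x * a) = op a • f x := by
  rw [← op_smul_eq_mul, map_smul]

variable (δ : S →+ S) (f : S →ₗ[Sᵐᵒᵖ] M) (D : S →+ M)

theorem map_mul_add_mul_of_map_mul_self_s10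
    (hD : ∀ x, D (x * x) = op x • D x + op (δ x) • f x) (x y : S) :
    D (x * y + y * x) =
      op y • D x + op (δ y) • f x + (op x • D y + op (δ x) • f y) := by
  have h := hD (x + y)
  rw [show (x + y) * (x + y) = x * x + y * y + (x * y + y * x) by
      simp only [add_mul, mul_add]; abel,
    map_add, map_add, hD x, hD y] at h
  simp only [map_add D x y, map_add δ, map_add f, op_add, add_smul, smul_add] at h
  linear_combination (norm := abel) h

theorem two_nsmul_map_mul_mul_of_map_mul_self
    (hδ : ∀ a b, δ (a * b) = δ a * b + a * δ b)
    (hD : ∀ x, D (x * x) = op x • D x + op (δ x) • f x) (x y : S) :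
    2 • D (x * y * x) =
      2 • (op x • (op y • D x) + op x • (op (δ y) • f x) + op (δ x) • (op y • f x)) := by
  have h := congrArg D (show x * (x * y + y * x) + (x * y + y * x) * x =
      x * x * y + y * (x * x) + (x * y * x + x * y * x) by
    simp only [add_mul, mul_add, mul_assoc]; abel)
  rw [map_mul_add_mul_of_map_mul_self_s10 δ f D hD x, map_mul_add_mul_of_map_mul_self_s10 δ f D hD x y,
    map_add D, map_mul_add_mul_of_map_mul_self_s10 δ f D hD (x * x), map_add D, hD] at h
  simp only [map_add, hδ, f.map_mul_eq_op_smul, op_add, op_mul, add_smul, smul_add, mul_smul] at h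
  linear_combination (norm := abel) -h

end JordanDerivation

theorem jordan_derivation_xyx_general
    {S M : Type*} [Ring S]
    [AddCommGroup M] [Module Sᵐᵒᵖ M]
    (htf : ∀ m : M, 2 • m = 0 → m = 0)
    (δ : S → S) (hδadd : ∀ a b : S, δ (a + b) = δ a + δ b)
    (hδmul : ∀ a b : S, δ (a * b) = δ a * b + a * δ b)
    (f : S → M) (hfadd : ∀ a b : S, f (a + b) = f a + f b)
    (hfright : ∀ x a : S, f (x * a) = op a • f x)
    (D : S → M) (hDadd : ∀ a b : S, D (a + b) = D a + D b)
    (hJordan : ∀ x : S, D (x * x) = op x • D x + op (δ x) • f x) :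
    ∀ x y : S, D (x * y * x) =
      op x • (op y • D x) + op x • (op (δ y) • f x) + op (δ x) • (op y • f x) := by
  let f' : S →ₗ[Sᵐᵒᵖ] M :=
    { toFun := f, map_add' := hfadd, map_smul' := fun a x => hfright x a.unop }
  intro x y
  have htwo := two_nsmul_map_mul_mul_of_map_mul_self (.mk' δ hδadd) f' (.mk' D hDadd)
    hδmul hJordan x y
  exact sub_eq_zero.mp (htf _ (by rw [smul_sub, sub_eq_zero]; exact htwo))

/-- For a Jordan `(δ,f)`-derivation `D` on a `2`-torsion-free bimodule `M`,
`D(xyx) = D(x)yx + f(x)δ(y)x + f(x)yδ(x)`. -/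
theorem jordan_derivation_xyx
    {R S M : Type*} [CommRing R] [Ring S] [Algebra R S]
    [AddCommGroup M] [Module S M] [Module Sᵐᵒᵖ M] [SMulCommClass S Sᵐᵒᵖ M]
    (htf : ∀ m : M, 2 • m = 0 → m = 0)
    (δ : S → S) (hδadd : ∀ a b : S, δ (a + b) = δ a + δ b)
    (hδmul : ∀ a b : S, δ (a * b) = δ a * b + a * δ b)
    (f : S → M) (hfadd : ∀ a b : S, f (a + b) = f a + f b)
    (hfleft : ∀ a x : S, f (a * x) = a • f x)
    (hfright : ∀ x a : S, f (x * a) = op a • f x)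
    (D : S → M) (hDadd : ∀ a b : S, D (a + b) = D a + D b)
    (hJordan : ∀ x : S, D (x * x) = op x • D x + op (δ x) • f x)
    (hrule : ∀ x y : S, D (x * y + y * x) =
      (op y • D x + y • D x) + (op (δ y) • f x + δ y • f x)) :
    ∀ x y : S, D (x * y * x) =
      op x • (op y • D x) + op x • (op (δ y) • f x) + op (δ x) • (op y • f x) :=
  jordan_derivation_xyx_general htf δ hδadd hδmul f hfadd hfright D hDadd hJordan
end

section
/- If D : S → M is a Jordan (δ,f)-derivation on a 2-torsion-free bimodule M, then D(xyz + zyx) = D(x)yz + D(z)yx + f(x)δ(y)z + f(z)δ(y)x + f(x)yδ(z) + f(z)yδ(x) for all x, y, z ∈ S. -/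
/-!
Linearizing `D(x²)` (replace `x` by `a + b`) computes `D` on the Jordan product `a ∘ b = ab + ba`.
Since `2 aba = a ∘ (a ∘ b) - a² ∘ b`, this determines `2 D(aba)`, hence `D(aba)` as `M` has no
`2`-torsion. Linearizing `D(aba)` in `a` (replace `a` by `x + z`) gives the formula for
`D(xyz + zyx)`.
-/

open MulOpposite

theorem eq_of_add_self_eq_add_self {M : Type*} [AddCommGroup M]
    (htf : ∀ m : M, 2 • m = 0 → m = 0) {a b : M} (h : a + a = b + b) : a = b :=
  sub_eq_zero.mp <| htf _ <| by rw [two_nsmul, sub_add_sub_comm, h, sub_self]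

section JordanDerivation

variable {S M : Type*} [Ring S] [AddCommGroup M] [Module Sᵐᵒᵖ M] {δ : S → S} {f D : S → M}

theorem map_mul_add_mul_swap_of_jordan (hδadd : ∀ a b : S, δ (a + b) = δ a + δ b)
    (hfadd : ∀ a b : S, f (a + b) = f a + f b) (hDadd : ∀ a b : S, D (a + b) = D a + D b)
    (hJordan : ∀ x : S, D (x * x) = op x • D x + op (δ x) • f x) (a b : S) :
    D (a * b + b * a) = op b • D a + op a • D b + op (δ b) • f a + op (δ a) • f b := by
  have h := hJordan (a + b)
  rw [show (a + b) * (a + b) = a * a + (a * b + b * a) + b * b by noncomm_ring,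
    hDadd, hDadd, hJordan, hJordan, hδadd, hfadd, hDadd a b] at h
  simp only [op_add, add_smul, smul_add] at h
  linear_combination (norm := abel) h

theorem map_sandwich_of_jordan (htf : ∀ m : M, 2 • m = 0 → m = 0)
    (hδadd : ∀ a b : S, δ (a + b) = δ a + δ b)
    (hδmul : ∀ a b : S, δ (a * b) = δ a * b + a * δ b)
    (hfadd : ∀ a b : S, f (a + b) = f a + f b)
    (hfright : ∀ x a : S, f (x * a) = op a • f x)
    (hDadd : ∀ a b : S, D (a + b) = D a + D b)
    (hJordan : ∀ x : S, D (x * x) = op x • D x + op (δ x) • f x) (a b : S) :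
    D (a * b * a) = op a • (op b • D a) + op a • (op (δ b) • f a) + op (δ a) • (op b • f a) := by
  have polar := map_mul_add_mul_swap_of_jordan hδadd hfadd hDadd hJordan
  have h := congrArg D (show a * (a * b + b * a) + (a * b + b * a) * a =
    a * b * a + a * b * a + (a * a * b + b * (a * a)) by noncomm_ring)
  rw [polar a, polar a b, hDadd (a * b * a + a * b * a), hDadd (a * b * a), polar, hJordan,
    hδadd, hδmul, hδmul, hδmul, hfadd, hfright b a, hfright a b, hfright a a] at h
  simp only [op_add, op_mul, add_smul, smul_add, mul_smul] at h
  apply eq_of_add_self_eq_add_self htf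
  linear_combination (norm := abel) -h

end JordanDerivation

theorem jordan_derivation_xyz_general
    {S M : Type*} [Ring S]
    [AddCommGroup M] [Module Sᵐᵒᵖ M]
    (htf : ∀ m : M, 2 • m = 0 → m = 0)
    (δ : S → S) (hδadd : ∀ a b : S, δ (a + b) = δ a + δ b)
    (hδmul : ∀ a b : S, δ (a * b) = δ a * b + a * δ b)
    (f : S → M) (hfadd : ∀ a b : S, f (a + b) = f a + f b)
    (hfright : ∀ x a : S, f (x * a) = op a • f x)
    (D : S → M) (hDadd : ∀ a b : S, D (a + b) = D a + D b)
    (hJordan : ∀ x : S, D (x * x) = op x • D x + op (δ x) • f x) :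
    ∀ x y z : S, D (x * y * z + z * y * x) =
      op z • (op y • D x) + op x • (op y • D z) +
      op z • (op (δ y) • f x) + op x • (op (δ y) • f z) +
      op (δ z) • (op y • f x) + op (δ x) • (op y • f z) := by
  have sandwich := map_sandwich_of_jordan htf hδadd hδmul hfadd hfright hDadd hJordan
  intro x y z
  have h := congrArg D (show (x + z) * y * (x + z) = x * y * z + z * y * x + (x * y * x + z * y * z)
    by noncomm_ring)
  rw [sandwich, hDadd (x * y * z + z * y * x), hDadd (x * y * x), sandwich, sandwich, hδadd,
    hDadd x z, hfadd] at h
  simp only [op_add, add_smul, smul_add] at h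
  linear_combination (norm := abel) -h

/-- For a Jordan `(δ,f)`-derivation `D` on a `2`-torsion-free bimodule `M`,
`D(xyz + zyx) = D(x)yz + D(z)yx + f(x)δ(y)z + f(z)δ(y)x + f(x)yδ(z) + f(z)yδ(x)`. -/
theorem jordan_derivation_xyz
    {R S M : Type*} [CommRing R] [Ring S] [Algebra R S]
    [AddCommGroup M] [Module S M] [Module Sᵐᵒᵖ M] [SMulCommClass S Sᵐᵒᵖ M]
    (htf : ∀ m : M, 2 • m = 0 → m = 0)
    (δ : S → S) (hδadd : ∀ a b : S, δ (a + b) = δ a + δ b)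
    (hδmul : ∀ a b : S, δ (a * b) = δ a * b + a * δ b)
    (f : S → M) (hfadd : ∀ a b : S, f (a + b) = f a + f b)
    (hfleft : ∀ a x : S, f (a * x) = a • f x)
    (hfright : ∀ x a : S, f (x * a) = op a • f x)
    (D : S → M) (hDadd : ∀ a b : S, D (a + b) = D a + D b)
    (hJordan : ∀ x : S, D (x * x) = op x • D x + op (δ x) • f x) :
    ∀ x y z : S, D (x * y * z + z * y * x) =
      op z • (op y • D x) + op x • (op y • D z) +
      op z • (op (δ y) • f x) + op x • (op (δ y) • f z) +
      op (δ z) • (op y • f x) + op (δ x) • (op y • f z) :=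
  jordan_derivation_xyz_general htf δ hδadd hδmul f hfadd hfright D hDadd hJordan
end

section
/- If D : S → M is a Jordan (δ,f)-derivation on a 2-torsion-free bimodule M, then (D(xy) − D(x)y − f(x)δ(y))(xy − yx) = 0 for all x, y ∈ S. -/
/-!
Linearizing the Jordan identity at `x + y` shows that the defect
`G(x, y) = D(xy) - D(x)y - f(x)δ(y)` is antisymmetric. Linearizing it at `(x, xy + yx)` and at
`(x², y)` gives `2 D(xyx) = 2 (D(x)yx + f(x)δ(y)x + f(x)yδ(x))`, so 2-torsion-freeness determines
`D(xyx)`. Comparing the linearization at `(x, yxy)` with the Jordan identity at `(xy)²` and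
`(yx)²` then leaves exactly `G(x, y)xy - G(x, y)yx = 0`.
-/

open MulOpposite
open scoped RightActions

section JordanDerivation

variable {S M : Type*} [Ring S] [AddCommGroup M] [Module Sᵐᵒᵖ M]

def IsJordanDerivation (δ : S → S) (f D : S → M) : Prop :=
  ∀ x, D (x * x) = D x <• x + f x <• δ x

def derivationDefect (δ : S → S) (f D : S → M) (x y : S) : M :=
  D (x * y) - D x <• y - f x <• δ y

namespace IsJordanDerivation

variable {δ : S →+ S} {f D : S →+ M}

theorem map_mul_add_map_mul_swap (hD : IsJordanDerivation δ f D) (x y : S) :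
    D (x * y) + D (y * x) = D x <• y + D y <• x + f x <• δ y + f y <• δ x := by
  have h := hD (x + y)
  rw [show (x + y) * (x + y) = x * x + (x * y + y * x) + y * y by noncomm_ring] at h
  simp only [map_add, hD x, hD y, op_add, add_smul, smul_add] at h
  linear_combination (norm := abel) h

theorem derivationDefect_swap (hD : IsJordanDerivation δ f D) (x y : S) :
    derivationDefect δ f D y x = -derivationDefect δ f D x y := by
  rw [eq_neg_iff_add_eq_zero]
  linear_combination (norm := (simp only [derivationDefect]; abel))
    hD.map_mul_add_map_mul_swap y x

theorem map_mul_mul_self (hD : IsJordanDerivation δ f D)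
    (hδ : ∀ a b, δ (a * b) = δ a * b + a * δ b) (hf : ∀ x a, f (x * a) = f x <• a)
    (htf : ∀ m : M, 2 • m = 0 → m = 0) (x y : S) :
    D (x * y * x) = D x <• (y * x) + f x <• (δ y * x) + f x <• (y * δ x) := by
  have h₁ := hD.map_mul_add_map_mul_swap x (x * y + y * x)
  have h₂ := hD.map_mul_add_map_mul_swap (x * x) y
  rw [show x * (x * y + y * x) = x * x * y + x * y * x by noncomm_ring,
    show (x * y + y * x) * x = x * y * x + y * (x * x) by noncomm_ring,
    map_add D (x * y), hD.map_mul_add_map_mul_swap x y] at h₁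
  refine sub_eq_zero.mp (htf _ ?_)
  simp only [map_add, hD x, hδ, hf, op_add, op_mul, add_smul, smul_add, smul_sub, mul_smul]
    at h₁ h₂ ⊢
  linear_combination (norm := abel) h₁ - h₂

theorem derivationDefect_smul_commutator_eq_zero (hD : IsJordanDerivation δ f D)
    (hδ : ∀ a b, δ (a * b) = δ a * b + a * δ b) (hf : ∀ x a, f (x * a) = f x <• a)
    (htf : ∀ m : M, 2 • m = 0 → m = 0) (x y : S) :
    derivationDefect δ f D x y <• (x * y - y * x) = 0 := by
  have hxy : D (x * y) = derivationDefect δ f D x y + D x <• y + f x <• δ y := by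
    rw [derivationDefect]; abel
  have hyx : D (y * x) = -derivationDefect δ f D x y + D y <• x + f y <• δ x := by
    rw [← hD.derivationDefect_swap, derivationDefect]; abel
  have h := hD.map_mul_add_map_mul_swap x (y * x * y)
  rw [show x * (y * x * y) = x * y * (x * y) by noncomm_ring,
    show y * x * y * x = y * x * (y * x) by noncomm_ring, hD (x * y), hD (y * x),
    hD.map_mul_mul_self hδ hf htf y x, hxy, hyx] at h
  simp only [hδ, hf, op_add, op_sub, op_mul, add_smul, sub_smul, smul_add, smul_neg, mul_smul]
    at h ⊢
  linear_combination (norm := abel) h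

end IsJordanDerivation
end JordanDerivation

theorem jordan_derivation_commutator_annihilation_general
    {S M : Type*} [Ring S]
    [AddCommGroup M] [Module Sᵐᵒᵖ M]
    (htf : ∀ m : M, 2 • m = 0 → m = 0)
    (δ : S → S) (hδadd : ∀ a b : S, δ (a + b) = δ a + δ b)
    (hδmul : ∀ a b : S, δ (a * b) = δ a * b + a * δ b)
    (f : S → M) (hfadd : ∀ a b : S, f (a + b) = f a + f b)
    (hfright : ∀ x a : S, f (x * a) = op a • f x)
    (D : S → M) (hDadd : ∀ a b : S, D (a + b) = D a + D b)
    (hJordan : ∀ x : S, D (x * x) = op x • D x + op (δ x) • f x) :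
    ∀ x y : S,
      op (x * y - y * x) • (D (x * y) - op y • D x - op (δ y) • f x) = 0 :=
  IsJordanDerivation.derivationDefect_smul_commutator_eq_zero
    (δ := AddMonoidHom.mk' δ hδadd) (f := AddMonoidHom.mk' f hfadd)
    (D := AddMonoidHom.mk' D hDadd) hJordan hδmul hfright htf

/-- For a Jordan `(δ,f)`-derivation `D` on a `2`-torsion-free bimodule `M`,
`(D(xy) − D(x)y − f(x)δ(y))(xy − yx) = 0`. -/
theorem jordan_derivation_commutator_annihilation
    {R S M : Type*} [CommRing R] [Ring S] [Algebra R S]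
    [AddCommGroup M] [Module S M] [Module Sᵐᵒᵖ M] [SMulCommClass S Sᵐᵒᵖ M]
    (htf : ∀ m : M, 2 • m = 0 → m = 0)
    (δ : S → S) (hδadd : ∀ a b : S, δ (a + b) = δ a + δ b)
    (hδmul : ∀ a b : S, δ (a * b) = δ a * b + a * δ b)
    (f : S → M) (hfadd : ∀ a b : S, f (a + b) = f a + f b)
    (hfleft : ∀ a x : S, f (a * x) = a • f x)
    (hfright : ∀ x a : S, f (x * a) = op a • f x)
    (D : S → M) (hDadd : ∀ a b : S, D (a + b) = D a + D b)
    (hJordan : ∀ x : S, D (x * x) = op x • D x + op (δ x) • f x) :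
    ∀ x y : S,
      op (x * y - y * x) • (D (x * y) - op y • D x - op (δ y) • f x) = 0 :=
  jordan_derivation_commutator_annihilation_general htf δ hδadd hδmul f hfadd hfright D hDadd
    hJordan
end

section
/- If D : S → M is a Jordan (δ,f)-derivation on a 2-torsion-free bimodule M, then for all x, y, z ∈ S: (D(xy)−D(x)y−f(x)δ(y))(zy−yz) + (D(zy)−D(z)y−f(z)δ(y))(xy−yx) = 0. -/
open MulOpposite

/-!
Linearizing `D(x²) = D(x)x + f(x)δ(x)` gives the formula for `D(ab + ba)`; applying it to
`a(ab + ba) + (ab + ba)a` produces `D(aba)` twice, so 2-torsion-freeness yields a formula for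
`D(aba)`. Expanding `D(a·bab + bab·a) = D((ab)² + (ba)²)` in two ways then shows that `[a, b]`
annihilates the defect `D(ab) - D(a)b - f(a)δ(b)`. Defect and commutator are both additive in `a`,
so replacing `a` by `x + z` leaves only the two cross terms.
-/

section

variable {S M : Type*} [Ring S] [AddCommGroup M] [Module Sᵐᵒᵖ M]

def jordanDefect (δ : S →+ S) (f D : S →+ M) (a b : S) : M :=
  D (a * b) - op b • D a - op (δ b) • f a

theorem jordanDefect_add_left (δ : S →+ S) (f D : S →+ M) (a a' b : S) :
    jordanDefect δ f D (a + a') b = jordanDefect δ f D a b + jordanDefect δ f D a' b := by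
  simp only [jordanDefect, add_mul, map_add, smul_add]
  abel

variable {δ : S →+ S} {f D : S →+ M}

theorem map_mul_add_mul_swap_of_map_mul_self
    (hD : ∀ x, D (x * x) = op x • D x + op (δ x) • f x) (a b : S) :
    D (a * b + b * a) = op b • D a + op a • D b + op (δ b) • f a + op (δ a) • f b := by
  have h := hD (a + b)
  rw [show (a + b) * (a + b) = a * a + (a * b + b * a) + b * b by noncomm_ring] at h
  simp only [map_add, hD, op_add, add_smul, smul_add] at h ⊢
  linear_combination (norm := abel) h

theorem map_jordan_triple_of_map_mul_self (htf : ∀ m : M, 2 • m = 0 → m = 0)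
    (hδ : ∀ a b, δ (a * b) = δ a * b + a * δ b) (hf : ∀ x a, f (x * a) = op a • f x)
    (hD : ∀ x, D (x * x) = op x • D x + op (δ x) • f x) (a b : S) :
    D (a * (b * a)) = op (b * a) • D a + op (δ (b * a)) • f a := by
  have hlin := map_mul_add_mul_swap_of_map_mul_self hD
  have h := hlin a (a * b + b * a)
  rw [show a * (a * b + b * a) + (a * b + b * a) * a
        = (a * a * b + b * (a * a)) + (a * (b * a) + a * (b * a)) by noncomm_ring,
      map_add, hlin (a * a) b, hlin a b] at h
  refine sub_eq_zero.mp (htf _ ?_)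
  simp only [map_add, hδ, hf, hD, op_add, op_mul, add_smul, mul_smul, smul_add] at h ⊢
  linear_combination (norm := abel) h

theorem commutator_smul_jordanDefect_eq_zero (htf : ∀ m : M, 2 • m = 0 → m = 0)
    (hδ : ∀ a b, δ (a * b) = δ a * b + a * δ b) (hf : ∀ x a, f (x * a) = op a • f x)
    (hD : ∀ x, D (x * x) = op x • D x + op (δ x) • f x) (a b : S) :
    op (a * b - b * a) • jordanDefect δ f D a b = 0 := by
  have hlin := map_mul_add_mul_swap_of_map_mul_self hD
  have h := hlin a (b * (a * b))
  rw [map_jordan_triple_of_map_mul_self htf hδ hf hD b a,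
    show a * (b * (a * b)) + b * (a * b) * a = (a * b) * (a * b) + (b * a) * (b * a) by
      noncomm_ring,
    map_add, hD (a * b), hD (b * a)] at h
  have h' := congrArg (op (b * a) • ·) (hlin a b)
  simp only [jordanDefect, map_add, hδ, hf, op_add, op_mul, op_sub, add_smul, sub_smul,
    mul_smul, smul_add, smul_sub, mul_add, mul_assoc] at h h' ⊢
  linear_combination (norm := abel) h - h'

theorem commutator_smul_jordanDefect_cross_eq_zero
    (hW : ∀ a b, op (a * b - b * a) • jordanDefect δ f D a b = 0) (x y z : S) :
    op (z * y - y * z) • jordanDefect δ f D x y + op (x * y - y * x) • jordanDefect δ f D z y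
      = 0 := by
  have h := hW (x + z) y
  rw [jordanDefect_add_left,
    show (x + z) * y - y * (x + z) = (x * y - y * x) + (z * y - y * z) by noncomm_ring,
    op_add, add_smul, smul_add, smul_add, hW x y, hW z y, zero_add, add_zero] at h
  rwa [add_comm]

end

theorem jordan_derivation_linearized_commutator_annihilation_general
    {S M : Type*} [Ring S]
    [AddCommGroup M] [Module Sᵐᵒᵖ M]
    (htf : ∀ m : M, 2 • m = 0 → m = 0)
    (δ : S → S) (hδadd : ∀ a b : S, δ (a + b) = δ a + δ b)
    (hδmul : ∀ a b : S, δ (a * b) = δ a * b + a * δ b)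
    (f : S → M) (hfadd : ∀ a b : S, f (a + b) = f a + f b)
    (hfright : ∀ x a : S, f (x * a) = op a • f x)
    (D : S → M) (hDadd : ∀ a b : S, D (a + b) = D a + D b)
    (hJordan : ∀ x : S, D (x * x) = op x • D x + op (δ x) • f x) :
    ∀ x y z : S,
      op (z * y - y * z) • (D (x * y) - op y • D x - op (δ y) • f x) +
      op (x * y - y * x) • (D (z * y) - op y • D z - op (δ y) • f z) = 0 :=
  commutator_smul_jordanDefect_cross_eq_zero (δ := .mk' δ hδadd) (f := .mk' f hfadd)
    (D := .mk' D hDadd) (commutator_smul_jordanDefect_eq_zero htf hδmul hfright hJordan)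

/-- Linearized commutator annihilation for a Jordan `(δ,f)`-derivation `D` on a
`2`-torsion-free bimodule `M`. -/
theorem jordan_derivation_linearized_commutator_annihilation
    {R S M : Type*} [CommRing R] [Ring S] [Algebra R S]
    [AddCommGroup M] [Module S M] [Module Sᵐᵒᵖ M] [SMulCommClass S Sᵐᵒᵖ M]
    (htf : ∀ m : M, 2 • m = 0 → m = 0)
    (δ : S → S) (hδadd : ∀ a b : S, δ (a + b) = δ a + δ b)
    (hδmul : ∀ a b : S, δ (a * b) = δ a * b + a * δ b)
    (f : S → M) (hfadd : ∀ a b : S, f (a + b) = f a + f b)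
    (hfleft : ∀ a x : S, f (a * x) = a • f x)
    (hfright : ∀ x a : S, f (x * a) = op a • f x)
    (D : S → M) (hDadd : ∀ a b : S, D (a + b) = D a + D b)
    (hJordan : ∀ x : S, D (x * x) = op x • D x + op (δ x) • f x) :
    ∀ x y z : S,
      op (z * y - y * z) • (D (x * y) - op y • D x - op (δ y) • f x) +
      op (x * y - y * x) • (D (z * y) - op y • D z - op (δ y) • f z) = 0 :=
  jordan_derivation_linearized_commutator_annihilation_general htf δ hδadd hδmul f hfadd hfright D
    hDadd hJordan
end
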